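/- In any uncountable Polish space P, there exist 2^ℵ₀ pairwise disjoint Bernstein sets B_t (t ∈ ℝ) such that for every t, B_t is not homeomorphic to any subspace of P \ B_t. -/

import Mathlib

/-- A Cantor set in a topological space: nonempty, compact, totally disconnected, perfect. -/
def IsCantorSet {P : Type*} [TopologicalSpace P] (C : Set P) : Prop :=
  C.Nonempty ∧ IsCompact C ∧ IsTotallyDisconnected C ∧ Perfect C

/-- A Bernstein set: no Cantor set is contained in it or in its complement. -/
def IsBernstein {P : Type*} [TopologicalSpace P] (B : Set P) : Prop :=
  ∀ C : Set P, IsCantorSet C → ¬C ⊆ B ∧ ¬C ⊆ Bᶜ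

/-!
A transfinite construction of length `𝔠`. The stages are the pairs `(t, r)` with `t ∈ ℝ` and `r`
a requirement on `B t`: a Cantor set, a sequence `g : ℕ → P × P`, or a padding index in `2^ℕ`.
Before each stage fewer than `𝔠` points have been used, and the stage adds fresh points to `B t`:
a point of the Cantor set (which has `𝔠` points), both coordinates of a fresh point of
`closure (range g)` if there is one, or an arbitrary point. Distinct stages add disjoint sets, so
the `B t` are pairwise disjoint; `B t` meets every Cantor set, and so does `B (t + 1) ⊆ (B t)ᶜ`.

If `f : B t → P \ B t` were a continuous injection, take `u` dense in `B t` and `g = (u, f ∘ u)`.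
Then the graph of `f` lies in `closure (range g)`, whose trace on `B t × P` is that graph. At the
stage `(t, g)` either a fresh pair `(a, b)` of `closure (range g)` went into `B t`, forcing
`f a = b ∈ B t`, or every point `(x, f x)` has a coordinate among fewer than `𝔠` used points, so
`#(B t) < 𝔠` as `f` is injective; but the padding requirements give `B t` size `𝔠`.
-/

open Set Function Topology Cardinal

universe u

section Cardinality

variable {P : Type u} [TopologicalSpace P]

theorem Perfect.continuum_le_mk [PolishSpace P] {C : Set P} (hC : Perfect C)
    (hne : C.Nonempty) : 𝔠 ≤ #C := by
  let := TopologicalSpace.upgradeIsCompletelyMetrizable P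
  obtain ⟨f, hfC, -, hf⟩ := hC.exists_nat_bool_injection hne
  have : Injective fun x => (⟨f x, hfC (mem_range_self x)⟩ : C) :=
    fun x y hxy => hf (congrArg Subtype.val hxy)
  simpa using lift_mk_le_lift_mk_of_injective this

theorem continuum_le_mk_of_uncountable [PolishSpace P] [Uncountable P] : 𝔠 ≤ #P := by
  obtain ⟨D, hD, hDne, -⟩ := exists_perfect_nonempty_of_isClosed_of_not_countable
    (isClosed_univ (X := P)) (countable_univ_iff.not.2 not_countable)
  exact (hD.continuum_le_mk hDne).trans (mk_set_le D)

theorem mk_isClosed_le_continuum [SecondCountableTopology P] :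
    #{C : Set P // IsClosed C} ≤ 𝔠 := by
  let b := TopologicalSpace.countableBasis P
  have hb := TopologicalSpace.isBasis_countableBasis P
  have hinj : Injective fun C : {C : Set P // IsClosed C} =>
      {s : b | (s : Set P) ⊆ (C : Set P)ᶜ} := by
    intro C D h
    refine Subtype.ext (compl_injective ?_)
    rw [hb.open_eq_sUnion' C.2.isOpen_compl, hb.open_eq_sUnion' D.2.isOpen_compl]
    congr 1
    ext s
    simpa using fun hs => Set.ext_iff.1 h ⟨s, hs⟩
  calc #{C : Set P // IsClosed C} ≤ #(Set b) := mk_le_of_injective hinj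
    _ = 2 ^ #b := mk_set
    _ ≤ 2 ^ ℵ₀ := power_le_power_left two_ne_zero
        (mk_le_aleph0_iff.2 (TopologicalSpace.countable_countableBasis P).to_subtype)
    _ = 𝔠 := two_power_aleph0

theorem mk_le_continuum_of_secondCountable [T1Space P] [SecondCountableTopology P] : #P ≤ 𝔠 :=
  (mk_le_of_injective (f := fun x : P => (⟨{x}, isClosed_singleton⟩ : {C : Set P // IsClosed C}))
    fun _ _ h => singleton_injective (congrArg Subtype.val h)).trans mk_isClosed_le_continuum

end Cardinality

theorem mk_le_add_of_forall_mem_or_mem {α X : Type u} {f g : α → X} (hf : Injective f)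
    (hg : Injective g) {V : Set X} (h : ∀ a, f a ∈ V ∨ g a ∈ V) : #α ≤ #V + #V :=
  calc #α = #(univ : Set α) := mk_univ.symm
    _ ≤ #(f ⁻¹' V ∪ g ⁻¹' V : Set α) := mk_le_mk_of_subset fun a _ => h a
    _ ≤ #(f ⁻¹' V) + #(g ⁻¹' V) := mk_union_le _ _
    _ ≤ #V + #V := add_le_add (mk_preimage_of_injective f V hf) (mk_preimage_of_injective g V hg)

/-- `U τ` is the union of the sets chosen at the predecessors of `τ` in a well-order of `T` of
type `ord #T`. -/
theorem exists_pairwise_disjoint_fresh_steps {T X : Type u} (hT : #T ≤ 𝔠)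
    (step : Set X → T → Set X) (hcount : ∀ U τ, (step U τ).Countable)
    (hfresh : ∀ U τ, Disjoint (step U τ) U) :
    ∃ U : T → Set X, (∀ τ, #(U τ) < 𝔠) ∧ Pairwise (Disjoint on fun τ => step (U τ) τ) := by
  obtain ⟨_, _, hT'⟩ := exists_ord_eq_type_lt T
  let F : T → Set X := WellFoundedLT.fix fun τ F => step (⋃ σ : Iio τ, F σ σ.2) τ
  have hF (τ : T) : F τ = step (⋃ σ : Iio τ, F σ) τ := WellFoundedLT.fix_eq _ τ
  have hprev {σ τ : T} (h : σ < τ) : F σ ⊆ ⋃ σ : Iio τ, F σ :=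
    subset_iUnion_of_subset ⟨σ, h⟩ le_rfl
  refine ⟨fun τ => ⋃ σ : Iio τ, F σ, fun τ => ?_, fun τ τ' hne => ?_⟩
  · calc #(⋃ σ : Iio τ, F σ) ≤ #(Iio τ) * ⨆ σ : Iio τ, #(F σ) := mk_iUnion_le _
      _ < 𝔠 := by
        refine mul_lt_of_lt aleph0_le_continuum ((mk_Iio_lt τ hT').trans_le hT) ?_
        refine (ciSup_le' fun σ => ?_).trans_lt aleph0_lt_continuum
        rw [hF]
        exact mk_le_aleph0_iff.2 (hcount _ _).to_subtype
  · simp only [onFun, ← hF]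
    rcases hne.lt_or_gt with h | h
    · exact (hF τ' ▸ hfresh _ τ').symm.mono_left (hprev h)
    · exact (hF τ ▸ hfresh _ τ).mono_right (hprev h)

section Graph

variable {X Y : Type*} [TopologicalSpace X] [TopologicalSpace Y]

theorem eq_of_mem_closure_range_graph [T2Space Y] {s : Set X} {f : s → Y} (hf : Continuous f)
    {p : X × Y} (hp : p ∈ closure (range fun x : s => ((x : X), f x))) (hp₁ : p.1 ∈ s) :
    f ⟨p.1, hp₁⟩ = p.2 := by
  have hψ : IsInducing (Prod.map ((↑) : s → X) (id : Y → Y)) :=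
    (IsEmbedding.subtypeVal.prodMap IsEmbedding.id).isInducing
  have hG : IsClosed {q : s × Y | f q.1 = q.2} :=
    isClosed_eq (hf.comp continuous_fst) continuous_snd
  have hrange : (range fun x : s => ((x : X), f x)) =
      Prod.map (↑) id '' {q : s × Y | f q.1 = q.2} := by
    ext q; simp [eq_comm]
  have : ((⟨p.1, hp₁⟩ : s), p.2) ∈ closure {q : s × Y | f q.1 = q.2} := by
    rw [hψ.closure_eq_preimage_closure_image, ← hrange]
    exact hp
  exact hG.closure_subset this

end Graph

theorem not_continuous_injective_into_compl {P : Type u} [TopologicalSpace P] [T2Space P]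
    [SecondCountableTopology P] {B : Set P} (hB : 𝔠 ≤ #B)
    (hgraph : ∀ g : ℕ → P × P, (closure (range g) ∩ B ×ˢ B).Nonempty ∨
      ∃ V : Set P, #V < 𝔠 ∧ closure (range g) ⊆ Prod.fst ⁻¹' V ∪ Prod.snd ⁻¹' V)
    {f : B → P} (hf : Continuous f) (hfi : Injective f) (hfB : ∀ x, f x ∉ B) : False := by
  have : Nonempty B := mk_ne_zero_iff.1 (continuum_pos.trans_le hB).ne'
  obtain ⟨u, hu⟩ := TopologicalSpace.exists_dense_seq B
  let γ : B → P × P := fun x => (x, f x)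
  rcases hgraph (γ ∘ u) with ⟨p, hp, hp₁, hp₂⟩ | ⟨V, hV, hcover⟩
  · have := eq_of_mem_closure_range_graph hf (closure_mono (range_comp_subset_range u γ) hp) hp₁
    exact hfB _ (this ▸ hp₂)
  · have hmem (x : B) : (x : P) ∈ V ∨ f x ∈ V := by
      have := (continuous_subtype_val.prodMk hf).range_subset_closure_image_dense hu
        (mem_range_self x)
      rw [← range_comp] at this
      exact hcover this
    exact (mk_le_add_of_forall_mem_or_mem Subtype.val_injective hfi hmem).not_gt
      (add_lt_of_lt aleph0_le_continuum hV hV |>.trans_le hB)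

namespace Set

open Classical in
noncomputable def pick {α : Type*} (s : Set α) : Set α :=
  if h : s.Nonempty then {h.some} else ∅

variable {α : Type*} {s : Set α}

theorem pick_subset : pick s ⊆ s := by
  unfold pick; split_ifs with h
  · exact singleton_subset_iff.2 h.some_mem
  · exact empty_subset _

theorem pick_subsingleton : (pick s).Subsingleton := by
  unfold pick; split_ifs
  exacts [subsingleton_singleton, subsingleton_empty]

theorem Nonempty.pick_nonempty (h : s.Nonempty) : (pick s).Nonempty := by
  simp [pick, h]

end Set

namespace Bernstein

variable {P : Type u} [TopologicalSpace P]

variable (P) in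
abbrev Requirement : Type u := {C : Set P // IsCantorSet C} ⊕ (ℕ → P × P) ⊕ (ℕ → Bool)

noncomputable def step (U : Set P) : Requirement P → Set P
  | .inl C => pick (C \ U)
  | .inr (.inl g) =>
      Prod.fst '' pick (closure (range g) ∩ Uᶜ ×ˢ Uᶜ) ∪
        Prod.snd '' pick (closure (range g) ∩ Uᶜ ×ˢ Uᶜ)
  | .inr (.inr _) => pick Uᶜ

theorem step_countable (U : Set P) (r : Requirement P) : (step U r).Countable := by
  rcases r with C | g | σ
  · exact pick_subsingleton.countable
  · exact (pick_subsingleton.countable.image _).union (pick_subsingleton.countable.image _)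
  · exact pick_subsingleton.countable

theorem disjoint_step (U : Set P) (r : Requirement P) : Disjoint (step U r) U := by
  rw [← subset_compl_iff_disjoint_right]
  rcases r with C | g | σ
  · exact pick_subset.trans (sdiff_subset_compl _ _)
  · have h : pick (closure (range g) ∩ Uᶜ ×ˢ Uᶜ) ⊆ Uᶜ ×ˢ Uᶜ :=
      pick_subset.trans inter_subset_right
    exact union_subset ((image_mono h).trans (fst_image_prod_subset _ _))
      ((image_mono h).trans (snd_image_prod_subset _ _))
  · exact pick_subset

theorem mk_requirement_le [T2Space P] [SecondCountableTopology P] :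
    #(ℝ × Requirement P) ≤ 𝔠 := by
  have hC : #{C : Set P // IsCantorSet C} ≤ 𝔠 :=
    (mk_subtype_mono fun _ hC => hC.2.1.isClosed).trans mk_isClosed_le_continuum
  have hg : (#P * #P) ^ ℵ₀ ≤ 𝔠 := (power_le_power_right (mul_le_of_le aleph0_le_continuum
    mk_le_continuum_of_secondCountable mk_le_continuum_of_secondCountable)).trans
      continuum_power_aleph0.le
  have hc := aleph0_le_continuum
  simpa [mk_sum, mk_prod, mk_real] using
    mul_le_of_le hc le_rfl (add_le_of_le hc hC (add_le_of_le hc hg le_rfl))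

noncomputable def family (U : ℝ × Requirement P → Set P) (t : ℝ) : Set P :=
  ⋃ r, step (U (t, r)) r

variable {U : ℝ × Requirement P → Set P}

theorem step_subset_family (t : ℝ) (r : Requirement P) : step (U (t, r)) r ⊆ family U t :=
  subset_iUnion (fun r => step (U (t, r)) r) r

theorem pairwise_disjoint_family (hdisj : Pairwise (Disjoint on fun τ => step (U τ) τ.2)) :
    Pairwise (Disjoint on family U) := by
  intro t s hts
  simp only [onFun, family, disjoint_iUnion_left, disjoint_iUnion_right]
  exact fun r r' => hdisj fun h => hts (congrArg Prod.fst h)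

theorem family_inter_nonempty [PolishSpace P] (hU : ∀ τ, #(U τ) < 𝔠) (t : ℝ) {C : Set P}
    (hC : IsCantorSet C) : (family U t ∩ C).Nonempty := by
  obtain ⟨x, hx⟩ := (sdiff_nonempty_of_mk_lt_mk
    ((hU (t, .inl ⟨C, hC⟩)).trans_le (hC.2.2.2.continuum_le_mk hC.1))).pick_nonempty
  exact ⟨x, step_subset_family t (.inl ⟨C, hC⟩) hx, (pick_subset hx).1⟩

theorem isBernstein_family [PolishSpace P] (hU : ∀ τ, #(U τ) < 𝔠)
    (hdisj : Pairwise (Disjoint on fun τ => step (U τ) τ.2)) (t : ℝ) :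
    IsBernstein (family U t) := by
  intro C hC
  constructor
  · intro hCB
    obtain ⟨x, hx, hxC⟩ := family_inter_nonempty hU (t + 1) hC
    exact (pairwise_disjoint_family hdisj (by simp : t + 1 ≠ t)).ne_of_mem hx (hCB hxC) rfl
  · intro hCB
    obtain ⟨x, hx, hxC⟩ := family_inter_nonempty hU t hC
    exact hCB hxC hx

theorem continuum_le_mk_family (hP : 𝔠 ≤ #P) (hU : ∀ τ, #(U τ) < 𝔠)
    (hdisj : Pairwise (Disjoint on fun τ => step (U τ) τ.2)) (t : ℝ) :
    𝔠 ≤ #(family U t) := by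
  let τ (σ : ℕ → Bool) : ℝ × Requirement P := (t, .inr (.inr σ))
  have hne (σ : ℕ → Bool) : (step (U (τ σ)) (τ σ).2).Nonempty :=
    (compl_nonempty_of_mk_lt_mk ((hU _).trans_le hP)).pick_nonempty
  choose x hx using hne
  have hinj : Injective fun σ => (⟨x σ, step_subset_family _ _ (hx σ)⟩ : family U t) := by
    intro σ σ' h
    by_contra hne
    exact (hdisj (by simpa [τ] using hne)).ne_of_mem (hx σ) (hx σ') (congrArg Subtype.val h)
  simpa using lift_mk_le_lift_mk_of_injective hinj

theorem family_prod_meets_closure_range_or_small_cover (hU : ∀ τ, #(U τ) < 𝔠) (t : ℝ)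
    (g : ℕ → P × P) :
    (closure (range g) ∩ family U t ×ˢ family U t).Nonempty ∨
      ∃ V : Set P, #V < 𝔠 ∧ closure (range g) ⊆ Prod.fst ⁻¹' V ∪ Prod.snd ⁻¹' V := by
  set V := U (t, .inr (.inl g))
  by_cases h : (closure (range g) ∩ Vᶜ ×ˢ Vᶜ).Nonempty
  · obtain ⟨p, hp⟩ := h.pick_nonempty
    have hsub := step_subset_family (U := U) t (.inr (.inl g))
    exact .inl ⟨p, (pick_subset hp).1, hsub (.inl ⟨p, hp, rfl⟩), hsub (.inr ⟨p, hp, rfl⟩)⟩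
  · refine .inr ⟨V, hU _, fun p hp => ?_⟩
    by_contra hpV
    exact h ⟨p, hp, by simpa [not_or] using hpV⟩

end Bernstein

open Bernstein

theorem exists_continuum_many_disjoint_rigid_bernstein_sets
    (P : Type*) [TopologicalSpace P] [PolishSpace P] [Uncountable P] :
    ∃ B : ℝ → Set P, Pairwise (Function.onFun Disjoint B) ∧
      ∀ t : ℝ, IsBernstein (B t) ∧
        ∀ S : Set P, S ⊆ (B t)ᶜ → IsEmpty (↥(B t) ≃ₜ ↥S) := by
  obtain ⟨U, hU, hdisj⟩ := exists_pairwise_disjoint_fresh_steps (mk_requirement_le (P := P))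
    (fun U τ => step U τ.2) (fun U τ => step_countable U τ.2) fun U τ => disjoint_step U τ.2
  refine ⟨family U, pairwise_disjoint_family hdisj,
    fun t => ⟨isBernstein_family hU hdisj t, fun S hS => ⟨fun e => ?_⟩⟩⟩
  exact not_continuous_injective_into_compl
    (continuum_le_mk_family continuum_le_mk_of_uncountable hU hdisj t)
    (family_prod_meets_closure_range_or_small_cover hU t)
    (continuous_subtype_val.comp e.continuous) (Subtype.val_injective.comp e.injective)
    fun x => hS (e x).2
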